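/- arXiv:2411.06012 — 8 statements merged into one kernel-verified Lean document; each statement's English description precedes it below -/
import Mathlib

section
/- Every cyclic module V over the Lie superalgebra g on which h acts diagonalizably with integer eigenvalues all lying in [-n, n] is finite dimensional. -/
/-- A module over the 5-dimensional Lie superalgebra `g` (generators `e, f, h, d, δ` with
graded commutation relations `[e,f]=h`, `[e,h]=-2e`, `[f,h]=2f`, `[e,d]=0`, `[f,d]=δ`,
`[h,d]=d`, `[e,δ]=d`, `[f,δ]=0`, `[h,δ]=-δ`, `d²=δ²=0`, `dδ+δd=0`) lying in the category
`𝒞ₙ`: the operator `h` acts diagonalizably with integer eigenvalues, all in `[-n, n]`.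
This is encoded by a weight-space decomposition `V = ⊕ weight i`, `-n ≤ i ≤ n`, on which
`h` acts by the scalar `i`, and with respect to which `e, f, d, δ` have degrees
`+2, -2, +1, -1` respectively. -/
structure GRep (n : ℕ) (V : Type*) [AddCommGroup V] [Module ℝ V] where
  e : Module.End ℝ V
  f : Module.End ℝ V
  h : Module.End ℝ V
  d : Module.End ℝ V
  δ : Module.End ℝ V
  comm_ef : e * f - f * e = h
  comm_eh : e * h - h * e = (-2 : ℝ) • e
  comm_fh : f * h - h * f = (2 : ℝ) • f
  comm_ed : e * d - d * e = 0
  comm_fd : f * d - d * f = δ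
  comm_hd : h * d - d * h = d
  comm_eδ : e * δ - δ * e = d
  comm_fδ : f * δ - δ * f = 0
  comm_hδ : h * δ - δ * h = -δ
  d_sq : d * d = 0
  δ_sq : δ * δ = 0
  comm_dδ : d * δ + δ * d = 0
  weight : ℤ → Submodule ℝ V
  weight_isInternal : DirectSum.IsInternal weight
  weight_bounded : ∀ i : ℤ, (n : ℤ) < |i| → weight i = ⊥
  h_weight : ∀ i : ℤ, ∀ v ∈ weight i, h v = (i : ℝ) • v
  e_weight : ∀ i : ℤ, ∀ v ∈ weight i, e v ∈ weight (i + 2)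
  f_weight : ∀ i : ℤ, ∀ v ∈ weight i, f v ∈ weight (i - 2)
  d_weight : ∀ i : ℤ, ∀ v ∈ weight i, d v ∈ weight (i + 1)
  δ_weight : ∀ i : ℤ, ∀ v ∈ weight i, δ v ∈ weight (i - 1)

namespace GRep

variable {n : ℕ} {V : Type*} [AddCommGroup V] [Module ℝ V] (g : GRep n V)

private lemma comm_pt {A B C : Module.End ℝ V} (hh : A * B - B * A = C) (w : V) :
    A (B w) = B (A w) + C w := by
  have := congrFun (congrArg DFunLike.coe hh) w
  simp only [LinearMap.sub_apply, Module.End.mul_apply] at this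
  exact sub_eq_iff_eq_add'.mp this

lemma ef_pt (w : V) : g.e (g.f w) = g.f (g.e w) + g.h w := comm_pt g.comm_ef w

lemma hf_pt (w : V) : g.h (g.f w) = g.f (g.h w) - (2:ℝ) • g.f w := by
  have := comm_pt g.comm_fh w
  simp only [LinearMap.smul_apply] at this
  exact eq_sub_iff_add_eq.mpr this.symm

lemma df_pt (w : V) : g.d (g.f w) = g.f (g.d w) - g.δ w := by
  have := comm_pt g.comm_fd w
  exact eq_sub_iff_add_eq.mpr this.symm

lemma δf_pt (w : V) : g.δ (g.f w) = g.f (g.δ w) := by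
  have := comm_pt g.comm_fδ w
  simpa using this.symm

lemma de_pt (w : V) : g.d (g.e w) = g.e (g.d w) := by
  have := comm_pt g.comm_ed w
  simpa using this.symm

lemma δe_pt (w : V) : g.δ (g.e w) = g.e (g.δ w) - g.d w := by
  have := comm_pt g.comm_eδ w
  exact eq_sub_iff_add_eq.mpr this.symm

lemma dd_pt (w : V) : g.d (g.d w) = 0 := by
  have := congrFun (congrArg DFunLike.coe g.d_sq) w
  simpa [Module.End.mul_apply] using this

lemma δδ_pt (w : V) : g.δ (g.δ w) = 0 := by
  have := congrFun (congrArg DFunLike.coe g.δ_sq) w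
  simpa [Module.End.mul_apply] using this

lemma δd_pt (w : V) : g.δ (g.d w) = -(g.d (g.δ w)) := by
  have := congrFun (congrArg DFunLike.coe g.comm_dδ) w
  simp only [LinearMap.add_apply, Module.End.mul_apply, LinearMap.zero_apply] at this
  exact (neg_eq_of_add_eq_zero_right this).symm

private lemma pow_succ_apply (T : Module.End ℝ V) (k : ℕ) (w : V) :
    (T^(k+1)) w = (T^k) (T w) := by rw [pow_succ]; rfl

private lemma pow_succ_apply' (T : Module.End ℝ V) (k : ℕ) (w : V) :
    (T^(k+1)) w = T ((T^k) w) := by rw [pow_succ']; rfl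

lemma δ_fpow (a : ℕ) (w : V) : g.δ ((g.f^a) w) = (g.f^a) (g.δ w) := by
  induction a generalizing w with
  | zero => simp
  | succ a ih => rw [pow_succ_apply, ih, δf_pt, ← pow_succ_apply]

lemma d_epow (c : ℕ) (w : V) : g.d ((g.e^c) w) = (g.e^c) (g.d w) := by
  induction c generalizing w with
  | zero => simp
  | succ c ih => rw [pow_succ_apply, ih, de_pt, ← pow_succ_apply]

lemma d_fpow (a : ℕ) (w : V) :
    g.d ((g.f^(a+1)) w) = (g.f^(a+1)) (g.d w) - ((a:ℝ)+1) • (g.f^a) (g.δ w) := by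
  induction a generalizing w with
  | zero => simpa using g.df_pt w
  | succ a ih =>
    rw [pow_succ_apply g.f (a+1), ih, df_pt, δf_pt, map_sub, ← pow_succ_apply,
      ← pow_succ_apply]
    push_cast
    module

lemma δ_epow (c : ℕ) (w : V) :
    g.δ ((g.e^(c+1)) w) = (g.e^(c+1)) (g.δ w) - ((c:ℝ)+1) • (g.e^c) (g.d w) := by
  induction c generalizing w with
  | zero => simpa using g.δe_pt w
  | succ c ih =>
    rw [pow_succ_apply g.e (c+1), ih, δe_pt, de_pt, map_sub, ← pow_succ_apply,
      ← pow_succ_apply]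
    push_cast
    module

lemma e_fpow (a : ℕ) (w : V) :
    g.e ((g.f^(a+1)) w) = (g.f^(a+1)) (g.e w) + ((a:ℝ)+1) • (g.f^a) (g.h w)
      - ((a:ℝ)*((a:ℝ)+1)) • (g.f^a) w := by
  induction a generalizing w with
  | zero => simpa using g.ef_pt w
  | succ a ih =>
    rw [pow_succ_apply g.f (a+1), ih, ef_pt, hf_pt, map_add, map_sub, map_smul,
      ← pow_succ_apply, ← pow_succ_apply, ← pow_succ_apply]
    push_cast
    module

/-- The four basis elements of the exterior algebra on the odd part. -/
def Xop : Fin 4 → Module.End ℝ V :=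
  fun x => match x with
  | 0 => 1
  | 1 => g.d
  | 2 => g.δ
  | 3 => g.d * g.δ

def wtx : Fin 4 → ℤ := fun x => match x with
  | 0 => 0 | 1 => 1 | 2 => -1 | 3 => 0

def dIdx : Fin 4 → Fin 4 := fun x => match x with
  | 0 => 1 | 1 => 1 | 2 => 3 | 3 => 3

def dcoef : Fin 4 → ℝ := fun x => match x with
  | 0 => 1 | 1 => 0 | 2 => 1 | 3 => 0

def δIdx : Fin 4 → Fin 4 := fun x => match x with
  | 0 => 2 | 1 => 3 | 2 => 2 | 3 => 2

def δcoef : Fin 4 → ℝ := fun x => match x with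
  | 0 => 1 | 1 => -1 | 2 => 0 | 3 => 0

lemma wtx_bound (x : Fin 4) : |wtx x| ≤ 1 := by fin_cases x <;> simp [wtx]

lemma dX_pt (x : Fin 4) (w : V) :
    g.d (g.Xop x w) = dcoef x • g.Xop (dIdx x) w := by
  fin_cases x <;>
    simp [Xop, dcoef, dIdx, Module.End.mul_apply, dd_pt]

lemma δX_pt (x : Fin 4) (w : V) :
    g.δ (g.Xop x w) = δcoef x • g.Xop (δIdx x) w := by
  fin_cases x <;>
    simp [Xop, δcoef, δIdx, Module.End.mul_apply, δδ_pt, δd_pt, dd_pt]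

lemma X_weight (x : Fin 4) (i : ℤ) (w : V) (hw : w ∈ g.weight i) :
    g.Xop x w ∈ g.weight (i + wtx x) := by
  fin_cases x
  · simpa [Xop, wtx] using hw
  · simpa [Xop, wtx] using g.d_weight i w hw
  · simpa [Xop, wtx, sub_eq_add_neg] using g.δ_weight i w hw
  · have h1 := g.δ_weight i w hw
    have h2 := g.d_weight (i-1) _ h1
    have : i - 1 + 1 = i + wtx 3 := by simp [wtx]
    rw [this] at h2
    simpa [Xop, Module.End.mul_apply] using h2

lemma epow_weight (c : ℕ) (j : ℤ) (w : V) (hw : w ∈ g.weight j) :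
    (g.e^c) w ∈ g.weight (j + 2*c) := by
  induction c generalizing j w with
  | zero => simpa using hw
  | succ c ih =>
    have h1 := g.e_weight _ _ (ih j w hw)
    have : j + 2*c + 2 = j + 2*(c+1 : ℕ) := by push_cast; ring
    rw [this] at h1
    rwa [pow_succ_apply']

lemma fpow_weight (a : ℕ) (j : ℤ) (w : V) (hw : w ∈ g.weight j) :
    (g.f^a) w ∈ g.weight (j - 2*a) := by
  induction a generalizing j w with
  | zero => simpa using hw
  | succ a ih =>
    have h1 := g.f_weight _ _ (ih j w hw)
    have : j - 2*a - 2 = j - 2*(a+1 : ℕ) := by push_cast; ring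
    rw [this] at h1
    rwa [pow_succ_apply']

lemma wt_zero (j : ℤ) (w : V) (hw : w ∈ g.weight j) (hj : (n:ℤ) < |j|) : w = 0 := by
  rw [g.weight_bounded j hj] at hw
  simpa using hw

section Span

variable (vc : ℤ → V)

/-- `U c x i = e^c (x (vᵢ))`. -/
def U (c : ℕ) (x : Fin 4) (i : ℤ) : V := (g.e^c) (g.Xop x (vc i))

/-- `M a c x i = f^a e^c x vᵢ`, the spanning monomials. -/
def M (a c : ℕ) (x : Fin 4) (i : ℤ) : V := (g.f^a) (g.U vc c x i)

variable (supp : Finset ℤ)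

/-- The candidate finite-dimensional invariant submodule. -/
def WW : Submodule ℝ V :=
  Submodule.span ℝ (Set.range fun p : Fin (2*n+1) × Fin (n+1) × Fin 4 × supp =>
    g.M vc p.1 p.2.1 p.2.2.1 p.2.2.2)

lemma M_mem_WW {a c : ℕ} (ha : a ≤ 2*n) (hc : c ≤ n) (x : Fin 4) {i : ℤ}
    (hi : i ∈ supp) : g.M vc a c x i ∈ g.WW vc supp :=
  Submodule.subset_span ⟨⟨⟨a, by omega⟩, ⟨c, by omega⟩, x, ⟨i, hi⟩⟩, rfl⟩

variable {vc} (hvc : ∀ i, vc i ∈ g.weight i)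

include hvc

lemma U_weight (c : ℕ) (x : Fin 4) (i : ℤ) :
    g.U vc c x i ∈ g.weight (i + wtx x + 2*c) :=
  g.epow_weight c _ _ (g.X_weight x i _ (hvc i))

lemma M_weight (a c : ℕ) (x : Fin 4) (i : ℤ) :
    g.M vc a c x i ∈ g.weight (i + wtx x + 2*c - 2*a) :=
  g.fpow_weight a _ _ (g.U_weight hvc c x i)

lemma M_zero (a c : ℕ) (x : Fin 4) (i : ℤ)
    (hb : (n:ℤ) < |i + wtx x + 2*c - 2*a|) : g.M vc a c x i = 0 :=
  g.wt_zero _ _ (g.M_weight hvc a c x i) hb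

lemma U_zero (c : ℕ) (x : Fin 4) (i : ℤ)
    (hb : (n:ℤ) < |i + wtx x + 2*c|) : g.U vc c x i = 0 := by
  have := g.M_zero hvc 0 c x i (by simpa using hb)
  simpa [M] using this

lemma M_zero_far (a c : ℕ) (x : Fin 4) (i : ℤ) (hi : (n:ℤ) < |i|) :
    g.M vc a c x i = 0 := by
  have h0 : vc i = 0 := g.wt_zero i _ (hvc i) hi
  simp [M, U, h0]

lemma h_M (a c : ℕ) (x : Fin 4) (i : ℤ) :
    g.h (g.M vc a c x i) = ((i + wtx x + 2*c - 2*a : ℤ) : ℝ) • g.M vc a c x i :=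
  g.h_weight _ _ (g.M_weight hvc a c x i)

lemma h_U (c : ℕ) (x : Fin 4) (i : ℤ) :
    g.h (g.U vc c x i) = ((i + wtx x + 2*c : ℤ) : ℝ) • g.U vc c x i :=
  g.h_weight _ _ (g.U_weight hvc c x i)

omit hvc

lemma e_U (c : ℕ) (x : Fin 4) (i : ℤ) :
    g.e (g.U vc c x i) = g.U vc (c+1) x i := (pow_succ_apply' g.e c _).symm

lemma d_U (c : ℕ) (x : Fin 4) (i : ℤ) :
    g.d (g.U vc c x i) = dcoef x • g.U vc c (dIdx x) i := by
  rw [U, d_epow, dX_pt, map_smul]; rfl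

lemma δ_U (c : ℕ) (x : Fin 4) (i : ℤ) :
    g.δ (g.U vc c x i) = δcoef x • g.U vc c (δIdx x) i
      - (c:ℝ) • dcoef x • g.U vc (c-1) (dIdx x) i := by
  cases c with
  | zero =>
    simp only [U, pow_zero, Module.End.one_apply, Nat.cast_zero, zero_smul, sub_zero]
    exact g.δX_pt x _
  | succ c =>
    rw [U, δ_epow, δX_pt, dX_pt, map_smul, map_smul]
    push_cast
    rfl

variable {supp} in
lemma U_mem_WW {c : ℕ} (hc : c ≤ n) (x : Fin 4) {i : ℤ} (hi : i ∈ supp) :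
    g.U vc c x i ∈ g.WW vc supp := by
  have := g.M_mem_WW vc supp (a := 0) (Nat.zero_le _) hc x hi
  simpa [M] using this

variable {supp}

include hvc

/-- `f^a (U (c+1) x i)` is in `W`: either `c + 1 ≤ n`, or the vector vanishes. -/
lemma fUsucc_mem {a c : ℕ} (ha : a ≤ 2*n) (hc : c ≤ n) (x : Fin 4) {i : ℤ}
    (hi : i ∈ supp) : (g.f^a) (g.U vc (c+1) x i) ∈ g.WW vc supp := by
  by_cases hfar : (n:ℤ) < |i|
  · have h0 : vc i = 0 := g.wt_zero i _ (hvc i) hfar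
    simp [U, h0]
  · rcases Nat.lt_or_ge c n with hcn | hcn
    · exact g.M_mem_WW vc supp ha (by omega) x hi
    · have hceq : c = n := le_antisymm hc hcn
      have hzero : g.U vc (c+1) x i = 0 := by
        refine g.U_zero hvc (c+1) x i ?_
        have hx := wtx_bound x
        push_neg at hfar
        rw [abs_le] at hfar hx
        refine lt_of_lt_of_le ?_ (le_abs_self _)
        push_cast
        omega
      simp [hzero]

lemma closure_e {a c : ℕ} (ha : a ≤ 2*n) (hc : c ≤ n) (x : Fin 4) {i : ℤ}
    (hi : i ∈ supp) : g.e (g.M vc a c x i) ∈ g.WW vc supp := by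
  cases a with
  | zero =>
    have h1 : g.e (g.M vc 0 c x i) = g.U vc (c+1) x i := by
      simp [M, e_U]
    rw [h1]
    have := g.fUsucc_mem hvc (a := 0) (Nat.zero_le _) hc x hi
    simpa using this
  | succ a =>
    have h1 : g.e (g.M vc (a+1) c x i)
        = (g.f^(a+1)) (g.U vc (c+1) x i)
          + ((a:ℝ)+1) • (((i + wtx x + 2*c : ℤ) : ℝ) • g.M vc a c x i)
          - ((a:ℝ)*((a:ℝ)+1)) • g.M vc a c x i := by
      rw [M, e_fpow, e_U, g.h_U hvc, map_smul]
      rfl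
    rw [h1]
    refine sub_mem (add_mem ?_ (Submodule.smul_mem _ _ (Submodule.smul_mem _ _ ?_)))
      (Submodule.smul_mem _ _ ?_)
    · exact g.fUsucc_mem hvc ha hc x hi
    · exact g.M_mem_WW vc supp (by omega) hc x hi
    · exact g.M_mem_WW vc supp (by omega) hc x hi

lemma closure_f {a c : ℕ} (ha : a ≤ 2*n) (hc : c ≤ n) (x : Fin 4) {i : ℤ}
    (hi : i ∈ supp) : g.f (g.M vc a c x i) ∈ g.WW vc supp := by
  have h1 : g.f (g.M vc a c x i) = g.M vc (a+1) c x i :=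
    (pow_succ_apply' g.f a _).symm
  rw [h1]
  by_cases hfar : (n:ℤ) < |i|
  · rw [g.M_zero_far hvc _ _ _ _ hfar]; exact zero_mem _
  · rcases Nat.lt_or_ge a (2*n) with han | han
    · exact g.M_mem_WW vc supp (by omega) hc x hi
    · have haeq : a = 2*n := le_antisymm ha han
      have hzero : g.M vc (a+1) c x i = 0 := by
        refine g.M_zero hvc (a+1) c x i ?_
        have hx := wtx_bound x
        push_neg at hfar
        rw [abs_le] at hfar hx
        refine lt_of_lt_of_le ?_ (neg_le_abs _)
        push_cast
        omega
      rw [hzero]; exact zero_mem _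

lemma closure_h {a c : ℕ} (ha : a ≤ 2*n) (hc : c ≤ n) (x : Fin 4) {i : ℤ}
    (hi : i ∈ supp) : g.h (g.M vc a c x i) ∈ g.WW vc supp := by
  rw [g.h_M hvc]
  exact Submodule.smul_mem _ _ (g.M_mem_WW vc supp ha hc x hi)

lemma δU_mem {a c : ℕ} (ha : a ≤ 2*n) (hc : c ≤ n) (x : Fin 4) {i : ℤ}
    (hi : i ∈ supp) : (g.f^a) (g.δ (g.U vc c x i)) ∈ g.WW vc supp := by
  rw [δ_U, map_sub, map_smul, map_smul, map_smul]
  refine sub_mem (Submodule.smul_mem _ _ ?_)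
    (Submodule.smul_mem _ _ (Submodule.smul_mem _ _ ?_))
  · exact g.M_mem_WW vc supp ha hc _ hi
  · exact g.M_mem_WW vc supp ha (by omega) _ hi

lemma closure_δ {a c : ℕ} (ha : a ≤ 2*n) (hc : c ≤ n) (x : Fin 4) {i : ℤ}
    (hi : i ∈ supp) : g.δ (g.M vc a c x i) ∈ g.WW vc supp := by
  have h1 : g.δ (g.M vc a c x i) = (g.f^a) (g.δ (g.U vc c x i)) := by
    rw [M, δ_fpow]
  rw [h1]
  exact g.δU_mem hvc ha hc x hi

lemma closure_d {a c : ℕ} (ha : a ≤ 2*n) (hc : c ≤ n) (x : Fin 4) {i : ℤ}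
    (hi : i ∈ supp) : g.d (g.M vc a c x i) ∈ g.WW vc supp := by
  cases a with
  | zero =>
    have h1 : g.d (g.M vc 0 c x i) = dcoef x • g.U vc c (dIdx x) i := by
      simp [M, d_U]
    rw [h1]
    exact Submodule.smul_mem _ _ (g.U_mem_WW hc _ hi)
  | succ a =>
    have h1 : g.d (g.M vc (a+1) c x i)
        = dcoef x • g.M vc (a+1) c (dIdx x) i
          - ((a:ℝ)+1) • ((g.f^a) (g.δ (g.U vc c x i))) := by
      rw [M, d_fpow, d_U, map_smul]
      rfl
    rw [h1]
    refine sub_mem (Submodule.smul_mem _ _ (g.M_mem_WW vc supp ha hc _ hi))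
      (Submodule.smul_mem _ _ (g.δU_mem hvc (by omega) hc x hi))

end Span

end GRep


/-- Every cyclic `g`-module in `𝒞ₙ` (i.e. one generated by a single
element: every `g`-invariant submodule containing the generator is all of `V`) is
finite dimensional. -/
theorem cyclic_gmodule_finiteDimensional {n : ℕ} {V : Type*} [AddCommGroup V] [Module ℝ V]
    (g : GRep n V)
    (hcyclic : ∃ v : V, ∀ p : Submodule ℝ V, v ∈ p →
      (∀ x ∈ p, g.e x ∈ p ∧ g.f x ∈ p ∧ g.h x ∈ p ∧ g.d x ∈ p ∧ g.δ x ∈ p) → p = ⊤) :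
    FiniteDimensional ℝ V := by
  classical
  obtain ⟨v, hv⟩ := hcyclic
  have hmem : v ∈ ⨆ i, g.weight i := by
    rw [g.weight_isInternal.submodule_iSup_eq_top]; trivial
  rw [Submodule.mem_iSup_iff_exists_dfinsupp'] at hmem
  obtain ⟨cdf, hsum⟩ := hmem
  set vc : ℤ → V := fun i => (cdf i : V) with hvc_def
  have hvc : ∀ i, vc i ∈ g.weight i := fun i => (cdf i).2
  set supp := cdf.support with hsupp
  set W := g.WW vc supp with hW
  -- v ∈ W
  have hvW : v ∈ W := by
    rw [← hsum, DFinsupp.sum]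
    refine Submodule.sum_mem _ ?_
    intro i hi
    have hvceq : (cdf i : V) = g.M vc 0 0 0 i := by
      simp [GRep.M, GRep.U, GRep.Xop, hvc_def]
    rw [hvceq]
    exact g.M_mem_WW vc supp (Nat.zero_le _) (Nat.zero_le _) 0 hi
  -- invariance
  have hclosed : ∀ x ∈ W, g.e x ∈ W ∧ g.f x ∈ W ∧ g.h x ∈ W ∧ g.d x ∈ W ∧ g.δ x ∈ W := by
    have key : ∀ (T : Module.End ℝ V),
        (∀ (a c : ℕ), a ≤ 2*n → c ≤ n → ∀ (x : Fin 4), ∀ i ∈ supp,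
          T (g.M vc a c x i) ∈ W) → ∀ w ∈ W, T w ∈ W := by
      intro T hT w hw
      have hle : W ≤ W.comap T := by
        rw [hW, GRep.WW]
        refine Submodule.span_le.mpr ?_
        rintro _ ⟨⟨⟨a, haa⟩, ⟨c, hcc⟩, x, ⟨i, hii⟩⟩, rfl⟩
        exact hT a c (by omega) (by omega) x i hii
      exact hle hw
    intro w hw
    refine ⟨key g.e (fun a c ha hc x i hi => g.closure_e hvc ha hc x hi) w hw,
      key g.f (fun a c ha hc x i hi => g.closure_f hvc ha hc x hi) w hw,
      key g.h (fun a c ha hc x i hi => g.closure_h hvc ha hc x hi) w hw,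
      key g.d (fun a c ha hc x i hi => g.closure_d hvc ha hc x hi) w hw,
      key g.δ (fun a c ha hc x i hi => g.closure_δ hvc ha hc x hi) w hw⟩
  have htop : W = ⊤ := hv W hvW hclosed
  have hfd : FiniteDimensional ℝ W := by
    rw [hW, GRep.WW]
    exact FiniteDimensional.span_of_finite ℝ (Set.finite_range _)
  rw [htop] at hfd
  exact Submodule.topEquiv.finiteDimensional
end

section
/- Let V be in Cₙ with star operator ⋆ satisfying δ|_{V_i} = (-1)^{i+1} ⋆ d ⋆. Then the star operator induces an isomorphism H^i(ker(δ), d) ≅ H^{-i}(ker(d), δ) between the d-cohomology of the subcomplex ker(δ) in degree i and the δ-homology of the subcomplex ker(d) in degree -i. -/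
/-- For `V ∈ 𝒞ₙ` with star operator, `⋆` induces an isomorphism
`H^i(ker δ, d) ≅ H^{-i}(ker d, δ)` : stated elementwise, the map `[v] ↦ [⋆v]` from
`(ker d ∩ ker δ ∩ V_i)/d(ker δ ∩ V_{i-1})` to `(ker d ∩ ker δ ∩ V_{-i})/δ(ker d ∩ V_{-i+1})`
is injective and surjective. -/
theorem star_cohomology_iso {n : ℕ} {V : Type*} [AddCommGroup V] [Module ℝ V]
    (g : GRep n V)
    (star : Module.End ℝ V)
    (hstar_inv : star * star = 1)
    (hstar_weight : ∀ i : ℤ, ∀ v ∈ g.weight i, star v ∈ g.weight (-i))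
    (hstar_δ : ∀ i : ℤ, ∀ v ∈ g.weight i,
      g.δ v = ((-1 : ℝ) ^ (i + 1)) • star (g.d (star v)))
    (i : ℤ) :
    (∀ v ∈ g.weight i, g.d v = 0 → g.δ v = 0 →
      (∃ u ∈ g.weight (-i + 1), g.d u = 0 ∧ star v = g.δ u) →
      ∃ w ∈ g.weight (i - 1), g.δ w = 0 ∧ v = g.d w) ∧
    (∀ z ∈ g.weight (-i), g.d z = 0 → g.δ z = 0 →
      ∃ v ∈ g.weight i, g.d v = 0 ∧ g.δ v = 0 ∧
        ∃ u ∈ g.weight (-i + 1), g.d u = 0 ∧ star v - z = g.δ u) := by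
  have hss : ∀ v : V, star (star v) = v := fun v => by
    have := LinearMap.congr_fun hstar_inv v
    simpa using this
  constructor
  · rintro v hv hdv hδv ⟨u, hu, hdu, hsv⟩
    set c : ℝ := (-1 : ℝ) ^ (-i + 1 + 1) with hc
    have hδu : g.δ u = c • star (g.d (star u)) := hstar_δ (-i + 1) u hu
    have hsu : star u ∈ g.weight (i - 1) := by
      have := hstar_weight (-i + 1) u hu
      simpa [show -(-i + 1) = i - 1 by ring] using this
    refine ⟨c • star u, Submodule.smul_mem _ _ hsu, ?_, ?_⟩
    · -- δ (c • star u) = 0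
      have h1 : g.δ (star u) = ((-1 : ℝ) ^ (i - 1 + 1)) • star (g.d (star (star u))) :=
        hstar_δ (i - 1) (star u) hsu
      rw [hss u, hdu] at h1
      simp [h1, map_smul]
    · -- v = d (c • star u)
      have h2 : star (g.δ u) = c • g.d (star u) := by
        rw [hδu, map_smul, hss]
      have h3 : v = star (g.δ u) := by rw [← hsv, hss]
      rw [h3, h2, map_smul]
  · intro z hz hdz hδz
    have hsz : star z ∈ g.weight i := by
      have := hstar_weight (-i) z hz
      simpa using this
    have hdsz : g.d (star z) = 0 := by
      have h1 : g.δ z = ((-1 : ℝ) ^ (-i + 1)) • star (g.d (star z)) := hstar_δ (-i) z hz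
      rw [hδz] at h1
      have h2 : star (g.d (star z)) = 0 := by
        have hcne : ((-1 : ℝ) ^ (-i + 1)) ≠ 0 := by
          apply zpow_ne_zero; norm_num
        have := h1.symm
        rcases smul_eq_zero.mp this with h | h
        · exact absurd h hcne
        · exact h
      have := congrArg star h2
      rwa [hss, map_zero] at this
    have hδsz : g.δ (star z) = 0 := by
      have h1 : g.δ (star z) = ((-1 : ℝ) ^ (i + 1)) • star (g.d (star (star z))) :=
        hstar_δ i (star z) hsz
      rw [hss, hdz, map_zero, smul_zero] at h1
      exact h1
    refine ⟨star z, hsz, hdsz, hδsz, 0, Submodule.zero_mem _, map_zero _, ?_⟩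
    rw [hss, sub_self, map_zero]
end

section
/- Let V ∈ Cₙ. If a cohomology class [v] ∈ H^{-i}(V, d) has a harmonic representative (one killed by both d and δ), then [e^i v] ∈ H^i(V, d) also has a harmonic representative; specifically, if v⁰ is harmonic and cohomologous to v, then e^i v⁰ is harmonic and cohomologous to e^i v. -/
/-- Let `V ∈ 𝒞ₙ`. If a class `[v] ∈ H^{-i}(V,d)` admits a harmonic
representative `v⁰` (so `v = v⁰ + dτ` with `dv⁰ = δv⁰ = 0`), then `e^i v⁰` is a harmonic
representative of `[e^i v] ∈ H^i(V,d)`. -/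
theorem e_pow_preserves_harmonic_reps {n : ℕ} {V : Type*} [AddCommGroup V] [Module ℝ V]
    (g : GRep n V) (i : ℕ) (v v₀ τ : V)
    (hv : v ∈ g.weight (-(i : ℤ))) (hdv : g.d v = 0)
    (hdv₀ : g.d v₀ = 0) (hδv₀ : g.δ v₀ = 0)
    (hrep : v = v₀ + g.d τ) :
    g.d ((g.e ^ i) v₀) = 0 ∧ g.δ ((g.e ^ i) v₀) = 0 ∧
    ∃ σ, (g.e ^ i) v = (g.e ^ i) v₀ + g.d σ := by
  have hed : g.e * g.d = g.d * g.e := by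
    have := g.comm_ed; rw [sub_eq_zero] at this; exact this
  have hpow : ∀ k : ℕ, g.e ^ k * g.d = g.d * g.e ^ k := by
    intro k
    induction k with
    | zero => simp
    | succ k ih => rw [pow_succ, mul_assoc, hed, ← mul_assoc, ih, mul_assoc]
  have key : ∀ k : ℕ, g.d ((g.e ^ k) v₀) = 0 ∧ g.δ ((g.e ^ k) v₀) = 0 := by
    intro k
    induction k with
    | zero => simpa using ⟨hdv₀, hδv₀⟩
    | succ k ih =>
      obtain ⟨ihd, ihδ⟩ := ih
      constructor
      · have : g.d ((g.e ^ (k+1)) v₀) = (g.e ^ (k+1)) (g.d v₀) := by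
          have := congrArg (fun L => L v₀) (hpow (k+1))
          simpa using this.symm
        rw [this, hdv₀, map_zero]
      · have hcomm := congrArg (fun L => L ((g.e ^ k) v₀)) g.comm_eδ
        simp only [LinearMap.sub_apply, Module.End.mul_apply] at hcomm
        have : g.δ (g.e ((g.e ^ k) v₀)) = g.e (g.δ ((g.e ^ k) v₀)) - g.d ((g.e ^ k) v₀) := by
          linear_combination (norm := module) -hcomm
        rw [pow_succ']
        simpa [Module.End.mul_apply, ihδ, ihd] using this
  obtain ⟨h1, h2⟩ := key i
  refine ⟨h1, h2, (g.e ^ i) τ, ?_⟩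
  have : (g.e ^ i) (g.d τ) = g.d ((g.e ^ i) τ) := by
    have := congrArg (fun L => L τ) (hpow i)
    simpa using this
  rw [hrep, map_add, this]
end

section
/- Let V ∈ Cₙ satisfy the dδ-lemma: im(d) ∩ ker(δ) = im(δ) ∩ ker(d) = im(dδ). Then for every k, the map [e^k]: H^{-k}(V, d) → H^k(V, d) is an isomorphism. -/
namespace GRep

variable {n : ℕ} {V : Type*} [AddCommGroup V] [Module ℝ V] (g : GRep n V)

lemma weight_congr {i j : ℤ} (hij : i = j) {x : V} (hx : x ∈ g.weight i) :
    x ∈ g.weight j := hij ▸ hx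

/-! ### Pointwise commutation relations -/

lemma ef_app {i : ℤ} {x : V} (hx : x ∈ g.weight i) :
    g.e (g.f x) = g.f (g.e x) + (i : ℝ) • x := by
  have h1 := congrArg (fun T : Module.End ℝ V => T x) g.comm_ef
  simp only [LinearMap.sub_apply, Module.End.mul_apply] at h1
  rw [g.h_weight i x hx] at h1
  exact sub_eq_iff_eq_add'.mp h1

lemma fe_app {i : ℤ} {x : V} (hx : x ∈ g.weight i) :
    g.f (g.e x) = g.e (g.f x) - (i : ℝ) • x := by
  rw [g.ef_app hx]; abel

lemma ed_app (x : V) : g.e (g.d x) = g.d (g.e x) := by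
  have h1 := congrArg (fun T : Module.End ℝ V => T x) g.comm_ed
  simp only [LinearMap.sub_apply, Module.End.mul_apply, LinearMap.zero_apply] at h1
  exact sub_eq_zero.mp h1

lemma eδ_app (x : V) : g.e (g.δ x) = g.δ (g.e x) + g.d x := by
  have h1 := congrArg (fun T : Module.End ℝ V => T x) g.comm_eδ
  simp only [LinearMap.sub_apply, Module.End.mul_apply] at h1
  exact sub_eq_iff_eq_add'.mp h1

lemma dd_app (x : V) : g.d (g.d x) = 0 := by
  have h1 := congrArg (fun T : Module.End ℝ V => T x) g.d_sq
  simpa using h1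

lemma dδ_app (x : V) : g.d (g.δ x) = -g.δ (g.d x) := by
  have h1 := congrArg (fun T : Module.End ℝ V => T x) g.comm_dδ
  simp only [LinearMap.add_apply, Module.End.mul_apply, LinearMap.zero_apply] at h1
  exact eq_neg_of_add_eq_zero_left h1

lemma δd_app (x : V) : g.δ (g.d x) = -g.d (g.δ x) := by
  rw [g.dδ_app, neg_neg]

/-! ### Powers -/

lemma epow_succ_out (k : ℕ) (x : V) : (g.e ^ (k + 1)) x = g.e ((g.e ^ k) x) := by
  rw [pow_succ']; rfl

lemma epow_succ_in (k : ℕ) (x : V) : (g.e ^ (k + 1)) x = (g.e ^ k) (g.e x) := by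
  rw [pow_succ]; rfl

lemma fpow_succ_out (k : ℕ) (x : V) : (g.f ^ (k + 1)) x = g.f ((g.f ^ k) x) := by
  rw [pow_succ']; rfl

lemma epow_d (k : ℕ) (x : V) : (g.e ^ k) (g.d x) = g.d ((g.e ^ k) x) := by
  induction k generalizing x with
  | zero => simp
  | succ k ih =>
      rw [g.epow_succ_in k (g.d x), g.ed_app, ih (g.e x), ← g.epow_succ_in]

lemma epow_δ (k : ℕ) (x : V) :
    (g.e ^ (k + 1)) (g.δ x) =
      g.δ ((g.e ^ (k + 1)) x) + ((k : ℝ) + 1) • (g.e ^ k) (g.d x) := by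
  induction k with
  | zero =>
      simp only [pow_one, pow_zero, Module.End.one_apply, Nat.cast_zero, zero_add, one_smul]
      exact g.eδ_app x
  | succ k ih =>
      rw [g.epow_succ_out (k + 1) (g.δ x), ih, map_add, map_smul,
        g.eδ_app ((g.e ^ (k + 1)) x), ← g.epow_succ_out (k + 1) x,
        ← g.epow_succ_out k (g.d x), g.epow_d (k + 1) x]
      push_cast
      module

/-! ### Weights of powers -/

lemma epow_weight_s9 (k : ℕ) {i : ℤ} {x : V} (hx : x ∈ g.weight i) :
    (g.e ^ k) x ∈ g.weight (i + 2 * k) := by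
  induction k with
  | zero => simpa using hx
  | succ k ih =>
      rw [g.epow_succ_out]
      exact g.weight_congr (by push_cast; ring) (g.e_weight _ _ ih)

lemma fpow_weight_s9 (k : ℕ) {i : ℤ} {x : V} (hx : x ∈ g.weight i) :
    (g.f ^ k) x ∈ g.weight (i - 2 * k) := by
  induction k with
  | zero => simpa using hx
  | succ k ih =>
      rw [g.fpow_succ_out]
      exact g.weight_congr (by push_cast; ring) (g.f_weight _ _ ih)

/-! ### sl2 identities on (co)primitive vectors -/

lemma coprim_pump {μ : ℤ} {w : V} (hw : w ∈ g.weight μ) (he : g.e w = 0) (j : ℕ) :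
    g.e ((g.f ^ (j + 1)) w) = (((j : ℝ) + 1) * ((μ : ℝ) - j)) • (g.f ^ j) w := by
  induction j with
  | zero =>
      rw [g.fpow_succ_out 0 w]
      simp only [pow_zero, Module.End.one_apply]
      rw [g.ef_app hw, he, map_zero, zero_add]
      norm_num
  | succ j ih =>
      have hx : (g.f ^ (j + 1)) w ∈ g.weight (μ - 2 * (j + 1)) := by
        exact_mod_cast g.fpow_weight_s9 (j + 1) hw
      rw [g.fpow_succ_out (j + 1) w, g.ef_app hx, ih, map_smul, ← g.fpow_succ_out j w,
        ← add_smul]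
      congr 1
      push_cast
      ring

lemma prim_pump {μ : ℤ} {v : V} (hv : v ∈ g.weight μ) (hf : g.f v = 0) (j : ℕ) :
    g.f ((g.e ^ (j + 1)) v) = (((j : ℝ) + 1) * (-(μ : ℝ) - j)) • (g.e ^ j) v := by
  induction j with
  | zero =>
      rw [g.epow_succ_out 0 v]
      simp only [pow_zero, Module.End.one_apply]
      rw [g.fe_app hv, hf, map_zero, zero_sub]
      rw [← neg_smul]
      norm_num
  | succ j ih =>
      have hx : (g.e ^ (j + 1)) v ∈ g.weight (μ + 2 * (j + 1)) := by
        exact_mod_cast g.epow_weight_s9 (j + 1) hv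
      rw [g.epow_succ_out (j + 1) v, g.fe_app hx, ih, map_smul, ← g.epow_succ_out j v,
        ← sub_smul]
      congr 1
      push_cast
      ring

lemma comm_pow (j : ℕ) {μ : ℤ} {x : V} (hx : x ∈ g.weight μ) :
    (g.e ^ (j + 1)) (g.f x) =
      g.f ((g.e ^ (j + 1)) x) + (((j : ℝ) + 1) * ((μ : ℝ) + j)) • (g.e ^ j) x := by
  induction j with
  | zero =>
      simp only [zero_add, pow_one, pow_zero, Module.End.one_apply, Nat.cast_zero]
      rw [g.ef_app hx]
      norm_num
  | succ j ih =>
      have hx' : (g.e ^ (j + 1)) x ∈ g.weight (μ + 2 * (j + 1)) := by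
        exact_mod_cast g.epow_weight_s9 (j + 1) hx
      rw [g.epow_succ_out (j + 1) (g.f x), ih, map_add, map_smul,
        g.ef_app hx', ← g.epow_succ_out (j + 1) x, ← g.epow_succ_out j x,
        add_assoc, ← add_smul]
      congr 1
      push_cast
      ring_nf

lemma coprim_total {m : ℕ} {w : V} (hw : w ∈ g.weight (m : ℤ)) (he : g.e w = 0) :
    ∀ j : ℕ, j ≤ m → ∃ c : ℝ, c ≠ 0 ∧ (g.e ^ j) ((g.f ^ j) w) = c • w := by
  intro j
  induction j with
  | zero => intro _; exact ⟨1, one_ne_zero, by simp⟩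
  | succ j ih =>
      intro hj
      obtain ⟨c, hc0, hc⟩ := ih (Nat.le_of_succ_le hj)
      have hmj : (j : ℝ) < (m : ℝ) := by exact_mod_cast hj
      refine ⟨(((j : ℝ) + 1) * ((m : ℝ) - j)) * c, ?_, ?_⟩
      · exact mul_ne_zero (mul_ne_zero (by positivity) (sub_ne_zero.mpr (ne_of_gt hmj))) hc0
      · rw [g.epow_succ_in j ((g.f ^ (j + 1)) w), g.coprim_pump hw he j, map_smul, hc,
          smul_smul]
        norm_num

lemma prim_zero {m : ℕ} {v : V} (hv : v ∈ g.weight (-(m : ℤ))) (hf : g.f v = 0)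
    (he : (g.e ^ m) v = 0) : v = 0 := by
  have key : ∀ j : ℕ, j + 1 ≤ m → (g.e ^ (j + 1)) v = 0 → (g.e ^ j) v = 0 := by
    intro j hj h0
    have hp := g.prim_pump hv hf j
    rw [h0, map_zero] at hp
    have hcoef : (((j : ℝ) + 1) * (-((-(m : ℤ) : ℤ) : ℝ) - j)) ≠ 0 := by
      have hmj : (j : ℝ) + 1 ≤ (m : ℝ) := by exact_mod_cast hj
      apply ne_of_gt
      push_cast
      nlinarith
    have := (smul_eq_zero.mp hp.symm).resolve_left hcoef
    exact this
  have desc : ∀ j : ℕ, j ≤ m → (g.e ^ j) v = 0 → v = 0 := by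
    intro j
    induction j with
    | zero => intro _ h0; simpa using h0
    | succ j ih => intro hj h0; exact ih (by omega) (key j hj h0)
  exact desc m le_rfl he

/-! ### Hard Lefschetz at chain level -/

lemma hl (m : ℕ) :
    (∀ v ∈ g.weight (-(m : ℤ)), (g.e ^ m) v = 0 → v = 0) ∧
    (∀ w ∈ g.weight (m : ℤ), ∃ v ∈ g.weight (-(m : ℤ)), (g.e ^ m) v = w) := by
  suffices H : ∀ t m : ℕ, (n : ℤ) < (m : ℤ) + (t : ℤ) →
      (∀ v ∈ g.weight (-(m : ℤ)), (g.e ^ m) v = 0 → v = 0) ∧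
      (∀ w ∈ g.weight (m : ℤ), ∃ v ∈ g.weight (-(m : ℤ)), (g.e ^ m) v = w) by
    exact H (n + 1) m (by push_cast; omega)
  intro t
  induction t with
  | zero =>
      intro m hm
      have hb1 : g.weight (-(m : ℤ)) = ⊥ := g.weight_bounded _ (by simp at hm ⊢; omega)
      have hb2 : g.weight (m : ℤ) = ⊥ := g.weight_bounded _ (by simp at hm ⊢; omega)
      constructor
      · intro v hv _
        simpa [hb1] using hv
      · intro w hw
        have hw0 : w = 0 := by simpa [hb2] using hw
        exact ⟨0, zero_mem _, by simp [hw0]⟩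
  | succ t ih =>
      intro m hm
      obtain ⟨inj2, surj2⟩ := ih (m + 2) (by push_cast at hm ⊢; omega)
      constructor
      · intro v hv he
        have h1 : (g.e ^ (m + 1)) v = 0 := by rw [g.epow_succ_out, he, map_zero]
        have h2 : (g.e ^ (m + 2)) v = 0 := by rw [g.epow_succ_out, h1, map_zero]
        have hfv : g.f v ∈ g.weight (-((m + 2 : ℕ) : ℤ)) :=
          g.weight_congr (by push_cast; ring) (g.f_weight _ v hv)
        have he2 : (g.e ^ (m + 2)) (g.f v) = 0 := by
          have hc := g.comm_pow (m + 1) hv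
          rw [h2, h1, map_zero, smul_zero, add_zero] at hc
          exact hc
        have hfv0 : g.f v = 0 := inj2 _ hfv he2
        exact g.prim_zero hv hfv0 he
      · intro w hw
        have hew : g.e w ∈ g.weight ((m + 2 : ℕ) : ℤ) :=
          g.weight_congr (by push_cast; ring) (g.e_weight _ w hw)
        obtain ⟨z, hz, hez⟩ := surj2 _ hew
        have hz' : (g.e ^ (m + 1)) z ∈ g.weight (m : ℤ) :=
          g.weight_congr (by push_cast; ring) (g.epow_weight_s9 (m + 1) hz)
        have hw'm : w - (g.e ^ (m + 1)) z ∈ g.weight (m : ℤ) := sub_mem hw hz'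
        have hew' : g.e (w - (g.e ^ (m + 1)) z) = 0 := by
          rw [map_sub, ← g.epow_succ_out (m + 1) z, hez, sub_self]
        obtain ⟨c, hc0, hc⟩ := g.coprim_total hw'm hew' m le_rfl
        refine ⟨c⁻¹ • (g.f ^ m) (w - (g.e ^ (m + 1)) z) + g.e z, add_mem ?_ ?_, ?_⟩
        · exact Submodule.smul_mem _ _
            (g.weight_congr (by ring) (g.fpow_weight_s9 m hw'm))
        · exact g.weight_congr (by push_cast; ring) (g.e_weight _ z hz)
        · rw [map_add, map_smul, hc, ← g.epow_succ_in m z, inv_smul_smul₀ hc0]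
          abel

/-! ### Projections onto weight spaces -/

noncomputable def proj (j : ℤ) (x : V) : V :=
  letI := g.weight_isInternal.chooseDecomposition
  (DirectSum.decompose g.weight x j : V)

lemma proj_mem (j : ℤ) (x : V) : g.proj j x ∈ g.weight j := by
  letI := g.weight_isInternal.chooseDecomposition
  exact SetLike.coe_mem _

lemma proj_same {i : ℤ} {x : V} (hx : x ∈ g.weight i) : g.proj i x = x := by
  letI := g.weight_isInternal.chooseDecomposition
  exact DirectSum.decompose_of_mem_same _ hx

lemma proj_ne {i j : ℤ} (hij : i ≠ j) {x : V} (hx : x ∈ g.weight i) :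
    g.proj j x = 0 := by
  letI := g.weight_isInternal.chooseDecomposition
  exact DirectSum.decompose_of_mem_ne _ hx hij

lemma proj_zero (j : ℤ) : g.proj j (0 : V) = 0 := by
  letI := g.weight_isInternal.chooseDecomposition
  show ((DirectSum.decompose g.weight (0 : V) j : g.weight j) : V) = 0
  rw [DirectSum.decompose_zero]
  simp

lemma proj_add (j : ℤ) (x y : V) : g.proj j (x + y) = g.proj j x + g.proj j y := by
  letI := g.weight_isInternal.chooseDecomposition
  show ((DirectSum.decompose g.weight (x + y) j : g.weight j) : V) = _
  rw [DirectSum.decompose_add]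
  simp [proj]

lemma weight_induction {p : V → Prop} (h0 : p 0)
    (hw : ∀ i : ℤ, ∀ x ∈ g.weight i, p x)
    (hadd : ∀ x y, p x → p y → p (x + y)) (x : V) : p x := by
  have hx : x ∈ ⨆ i, g.weight i := by
    rw [show (⨆ i, g.weight i) = iSup g.weight from rfl,
      g.weight_isInternal.submodule_iSup_eq_top]
    trivial
  exact Submodule.iSup_induction (motive := p) g.weight hx hw h0 hadd

lemma proj_shift (T : Module.End ℝ V) (a : ℤ)
    (hT : ∀ i : ℤ, ∀ x ∈ g.weight i, T x ∈ g.weight (i + a)) (j : ℤ) (x : V) :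
    g.proj (j + a) (T x) = T (g.proj j x) := by
  refine g.weight_induction (p := fun y => g.proj (j + a) (T y) = T (g.proj j y))
    ?_ ?_ ?_ x
  · show g.proj (j + a) (T 0) = T (g.proj j 0)
    rw [map_zero, g.proj_zero, g.proj_zero, map_zero]
  · intro i y hy
    show g.proj (j + a) (T y) = T (g.proj j y)
    by_cases hij : i = j
    · subst hij
      rw [g.proj_same hy, g.proj_same (hT i y hy)]
    · rw [g.proj_ne hij hy, map_zero, g.proj_ne (by omega) (hT i y hy)]
  · intro y z hy hz
    show g.proj (j + a) (T (y + z)) = T (g.proj j (y + z))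
    rw [map_add, g.proj_add, g.proj_add, hy, hz, map_add]

/-! ### Harmonic representatives -/

lemma harm (lem₂ : ∀ v : V, ((∃ u, g.δ u = v) ∧ g.d v = 0) ↔ (∃ u, g.d (g.δ u) = v))
    {i : ℤ} {x : V} (hx : x ∈ g.weight i) (hdx : g.d x = 0) :
    ∃ y u, y ∈ g.weight i ∧ g.d y = 0 ∧ g.δ y = 0 ∧ y = x + g.d u := by
  have hδx : g.d (g.δ x) = 0 := by rw [g.dδ_app, hdx, map_zero, neg_zero]
  obtain ⟨u₀, hu₀⟩ := (lem₂ (g.δ x)).mp ⟨⟨x, rfl⟩, hδx⟩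
  have hdz : g.d (x + g.d u₀) = 0 := by rw [map_add, hdx, g.dd_app, add_zero]
  have hδz : g.δ (x + g.d u₀) = 0 := by
    rw [map_add, g.δd_app, hu₀]
    simp
  have hTδ : ∀ i : ℤ, ∀ x ∈ g.weight i, g.δ x ∈ g.weight (i + (-1)) :=
    fun i x hx => g.weight_congr (by ring) (g.δ_weight i x hx)
  refine ⟨g.proj i (x + g.d u₀), g.proj (i - 1) u₀, g.proj_mem i _, ?_, ?_, ?_⟩
  · have h1 := g.proj_shift g.d 1 g.d_weight i (x + g.d u₀)
    rw [hdz, g.proj_zero] at h1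
    exact h1.symm
  · have h1 := g.proj_shift g.δ (-1) hTδ i (x + g.d u₀)
    rw [hδz, g.proj_zero] at h1
    exact h1.symm
  · have h1 := g.proj_shift g.d 1 g.d_weight (i - 1) u₀
    have h2 : i - 1 + 1 = i := by ring
    rw [h2] at h1
    rw [g.proj_add, g.proj_same hx, h1]

end GRep

/-- Let `V ∈ 𝒞ₙ` satisfy the `dδ`-lemma:
`im(d) ∩ ker(δ) = im(δ) ∩ ker(d) = im(dδ)`. Then for every `k`, the map
`[e^k] : H^{-k}(V,d) → H^k(V,d)` is an isomorphism (stated elementwise: surjective and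
injective on cohomology classes). -/
theorem ddelta_lemma_implies_lefschetz {n : ℕ} {V : Type*} [AddCommGroup V] [Module ℝ V]
    (g : GRep n V)
    (lem₁ : ∀ v : V, ((∃ u, g.d u = v) ∧ g.δ v = 0) ↔ (∃ u, g.d (g.δ u) = v))
    (lem₂ : ∀ v : V, ((∃ u, g.δ u = v) ∧ g.d v = 0) ↔ (∃ u, g.d (g.δ u) = v)) :
    ∀ k : ℕ,
      (∀ v ∈ g.weight (k : ℤ), g.d v = 0 →
        ∃ w ∈ g.weight (-(k : ℤ)), g.d w = 0 ∧ ∃ u, v - (g.e ^ k) w = g.d u) ∧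
      (∀ w ∈ g.weight (-(k : ℤ)), g.d w = 0 →
        (∃ u, (g.e ^ k) w = g.d u) → ∃ u, w = g.d u) := by
  intro k
  cases k with
  | zero =>
      constructor
      · intro v hv hdv
        exact ⟨v, by simpa using hv, hdv, 0, by simp⟩
      · intro w _ _ hex
        obtain ⟨u, hu⟩ := hex
        exact ⟨u, by simpa using hu⟩
  | succ j =>
      constructor
      · -- surjectivity of [e^k]
        intro v hv hdv
        obtain ⟨y, u₀, hymem, hdy, hδy, hyeq⟩ := g.harm lem₂ hv hdv
        obtain ⟨w, hwmem, hew⟩ := (g.hl (j + 1)).2 y hymem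
        have hδwmem : g.δ w ∈ g.weight (-((j + 1 : ℕ) : ℤ) - 1) := g.δ_weight _ w hwmem
        have hδwmem2 : g.δ w ∈ g.weight (-((j + 2 : ℕ) : ℤ)) :=
          g.weight_congr (by push_cast; ring) hδwmem
        have hdwmem : g.d w ∈ g.weight (-(j : ℤ)) :=
          g.weight_congr (by push_cast; ring) (g.d_weight _ w hwmem)
        have hep : (g.e ^ (j + 1)) (g.d w) = 0 := by rw [g.epow_d, hew, hdy]
        have key : (g.e ^ (j + 1)) (g.δ w) = ((j : ℝ) + 1) • (g.e ^ j) (g.d w) := by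
          have h2 := g.epow_δ j w
          rw [hew, hδy, zero_add] at h2
          exact h2
        have hq : g.e (g.δ w) - ((j : ℝ) + 1) • g.d w ∈ g.weight (-(j : ℤ)) := by
          refine sub_mem ?_ (Submodule.smul_mem _ _ hdwmem)
          exact g.weight_congr (by push_cast; ring) (g.e_weight _ _ hδwmem)
        have heq : (g.e ^ j) (g.e (g.δ w) - ((j : ℝ) + 1) • g.d w) = 0 := by
          rw [map_sub, map_smul, ← g.epow_succ_in j (g.δ w), key, sub_self]
        have heδw : g.e (g.δ w) = ((j : ℝ) + 1) • g.d w :=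
          sub_eq_zero.mp ((g.hl j).1 _ hq heq)
        have hδw0 : g.δ w = 0 := by
          refine (g.hl (j + 2)).1 _ hδwmem2 ?_
          rw [g.epow_succ_in (j + 1) (g.δ w), heδw, map_smul, hep, smul_zero]
        have hdw0 : g.d w = 0 := by
          have h3 : ((j : ℝ) + 1) • g.d w = 0 := by rw [← heδw, hδw0, map_zero]
          exact (smul_eq_zero.mp h3).resolve_left (by positivity)
        exact ⟨w, hwmem, hdw0, ⟨-u₀, by rw [hew, hyeq, map_neg]; abel⟩⟩
      · -- injectivity of [e^k]
        intro w hw hdw hex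
        obtain ⟨u, hu⟩ := hex
        obtain ⟨y, u₀, hymem, hdy, hδy, hyeq⟩ := g.harm lem₂ hw hdw
        have hey : (g.e ^ (j + 1)) y = g.d (u + (g.e ^ (j + 1)) u₀) := by
          rw [hyeq, map_add, hu, g.epow_d, ← map_add]
        have heymem : (g.e ^ (j + 1)) y ∈ g.weight ((j + 1 : ℕ) : ℤ) :=
          g.weight_congr (by push_cast; ring) (g.epow_weight_s9 (j + 1) hymem)
        have hδey : g.δ ((g.e ^ (j + 1)) y) = 0 := by
          have h2 := g.epow_δ j y
          rw [hdy, map_zero, smul_zero, add_zero, hδy, map_zero] at h2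
          exact h2.symm
        obtain ⟨s, hs⟩ := (lem₁ ((g.e ^ (j + 1)) y)).mp ⟨⟨_, hey.symm⟩, hδey⟩
        have hTdδ : ∀ i : ℤ, ∀ x ∈ g.weight i, (g.d * g.δ) x ∈ g.weight (i + 0) := by
          intro i x hx
          exact g.weight_congr (by ring) (g.d_weight _ _ (g.δ_weight i x hx))
        have hs' : g.d (g.δ (g.proj ((j + 1 : ℕ) : ℤ) s)) = (g.e ^ (j + 1)) y := by
          have h3 := g.proj_shift (g.d * g.δ) 0 hTdδ ((j + 1 : ℕ) : ℤ) s
          rw [add_zero] at h3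
          calc g.d (g.δ (g.proj ((j + 1 : ℕ) : ℤ) s))
              = g.proj ((j + 1 : ℕ) : ℤ) ((g.d * g.δ) s) := h3.symm
            _ = g.proj ((j + 1 : ℕ) : ℤ) ((g.e ^ (j + 1)) y) := by
                show g.proj _ (g.d (g.δ s)) = _
                rw [hs]
            _ = (g.e ^ (j + 1)) y := g.proj_same heymem
        obtain ⟨t, htmem, het⟩ := (g.hl (j + 1)).2 _ (g.proj_mem ((j + 1 : ℕ) : ℤ) s)
        have hdδt : g.d (g.δ t) ∈ g.weight (-((j + 1 : ℕ) : ℤ)) := by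
          have h4 := g.d_weight _ _ (g.δ_weight _ t htmem)
          exact g.weight_congr (by ring) h4
        have hkey : (g.e ^ (j + 1)) (g.d (g.δ t)) = (g.e ^ (j + 1)) y := by
          rw [g.epow_d, g.epow_δ j t, map_add, map_smul, het, hs',
            ← g.epow_d j (g.d t), g.dd_app, map_zero, smul_zero, add_zero]
        have hy2 : y = g.d (g.δ t) := by
          have h5 : y - g.d (g.δ t) = 0 := by
            refine (g.hl (j + 1)).1 _ (sub_mem hymem hdδt) ?_
            rw [map_sub, hkey, sub_self]
          exact sub_eq_zero.mp h5
        exact ⟨g.δ t - u₀, by rw [map_sub, ← hy2, hyeq]; abel⟩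
end

section
/- Let V ∈ Cₙ and suppose [e^i]: H^{-i}(V,d) → H^i(V,d) is surjective for all i (so every d-cohomology class has a harmonic representative, and im(d)∩ker(δ) = im(d)∩im(δ)). Then im(d) ∩ im(δ) = im(dδ). -/
open scoped DirectSum


section Aux
variable {n : ℕ} {V : Type*} [AddCommGroup V] [Module ℝ V] (g : GRep n V)

noncomputable def GRep.dec (g : GRep n V) : V ≃ₗ[ℝ] ⨁ i : ℤ, g.weight i :=
  (LinearEquiv.ofBijective (DirectSum.coeLinearMap g.weight) g.weight_isInternal).symm

noncomputable def GRep.π (g : GRep n V) (i : ℤ) (v : V) : V := (g.dec v i : V)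

theorem GRep.π_of_mem {i : ℤ} {v : V} (hv : v ∈ g.weight i) : g.π i v = v := by
  simp [GRep.π, GRep.dec, g.weight_isInternal.ofBijective_coeLinearMap_of_mem hv]

theorem GRep.π_of_mem_ne {i j : ℤ} (hij : i ≠ j) {v : V} (hv : v ∈ g.weight i) :
    g.π j v = 0 := by
  simp [GRep.π, GRep.dec, g.weight_isInternal.ofBijective_coeLinearMap_of_mem_ne hij hv]

theorem GRep.π_mem (i : ℤ) (v : V) : g.π i v ∈ g.weight i := (g.dec v i).2

theorem GRep.π_add (i : ℤ) (v w : V) : g.π i (v + w) = g.π i v + g.π i w := by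
  simp [GRep.π, map_add]

theorem GRep.π_zero (i : ℤ) : g.π i 0 = 0 := by
  simp [GRep.π, map_zero]

theorem GRep.sum_π [∀ (i : ℤ) (x : g.weight i), Decidable (x ≠ 0)] (v : V) :
    ∑ i ∈ (g.dec v).support, g.π i v = v := by
  have h1 : (DirectSum.coeLinearMap g.weight) (g.dec v) = v := by
    simp [GRep.dec]
    exact (LinearEquiv.ofBijective (DirectSum.coeLinearMap g.weight) g.weight_isInternal).apply_symm_apply v
  conv_rhs => rw [← h1, ← DirectSum.sum_support_of (g.dec v)]
  rw [map_sum]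
  exact Finset.sum_congr rfl fun i _ => by
    simp [GRep.π, DirectSum.coeLinearMap_of]

theorem GRep.π_shift (T : Module.End ℝ V) (t : ℤ)
    (hT : ∀ j : ℤ, ∀ x ∈ g.weight j, T x ∈ g.weight (j + t)) (i : ℤ) (v : V) :
    g.π i (T v) = T (g.π (i - t) v) := by
  have htop : (⊤ : Submodule ℝ V) = iSup g.weight :=
    g.weight_isInternal.submodule_iSup_eq_top.symm
  have hv : v ∈ iSup g.weight := htop ▸ Submodule.mem_top
  induction hv using Submodule.iSup_induction' with
  | mem j x hx =>
      by_cases hij : i = j + t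
      · subst hij
        rw [g.π_of_mem (hT j x hx)]
        congr 1
        have hj : j + t - t = j := by ring
        rw [hj, g.π_of_mem hx]
      · rw [g.π_of_mem_ne (fun h => hij h.symm) (hT j x hx)]
        have hne : j ≠ i - t := by omega
        rw [g.π_of_mem_ne hne hx, map_zero]
  | zero => rw [map_zero, g.π_zero, g.π_zero, map_zero]
  | add x y _ _ hx hy =>
      rw [map_add, g.π_add, g.π_add, hx, hy, map_add]

theorem GRep.dδ_anticomm (v : V) : g.d (g.δ v) = - g.δ (g.d v) := by
  have h := congrArg (fun T : Module.End ℝ V => T v) g.comm_dδ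
  simp only [LinearMap.add_apply, Module.End.mul_apply, LinearMap.zero_apply] at h
  exact eq_neg_of_add_eq_zero_left h

theorem GRep.d_d (v : V) : g.d (g.d v) = 0 := by
  have h := congrArg (fun T : Module.End ℝ V => T v) g.d_sq
  simpa using h

theorem GRep.δ_δ (v : V) : g.δ (g.δ v) = 0 := by
  have h := congrArg (fun T : Module.End ℝ V => T v) g.δ_sq
  simpa using h

/-- Key downward induction. -/
theorem GRep.key
    (harm_rep : ∀ v : V, g.d v = 0 →
      ∃ w, g.d w = 0 ∧ g.δ w = 0 ∧ ∃ u, v - w = g.d u)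
    (hyp : ∀ v : V, ((∃ a, g.d a = v) ∧ g.δ v = 0) ↔
      ((∃ a, g.d a = v) ∧ (∃ b, g.δ b = v))) :
    ∀ (m : ℕ) (i : ℤ), (n : ℤ) ≤ i + m → ∀ v ∈ g.weight i, g.d v = 0 →
      (∃ b ∈ g.weight (i + 1), g.δ b = v) → ∃ c, g.d (g.δ c) = v := by
  intro m
  induction m using Nat.strong_induction_on with
  | _ m IH =>
    intro i him v hv hdv ⟨b, hbmem, hb⟩
    -- `d b` is in the image of `dδ` (either 0 or by induction)
    have hdbmem : g.d b ∈ g.weight (i + 1 + 1) := g.d_weight _ b hbmem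
    have hδdb : g.δ (g.d b) = 0 := by
      have h := g.dδ_anticomm b
      rw [hb, hdv] at h
      exact neg_eq_zero.mp h.symm
    have hdb : ∃ c₀, g.d (g.δ c₀) = g.d b := by
      by_cases hcase : (n : ℤ) < i + 2
      · have habs : (n : ℤ) < |i + 1 + 1| := lt_of_lt_of_le (by omega) (le_abs_self _)
        have : g.d b = 0 := by
          have := g.weight_bounded (i + 1 + 1) habs ▸ hdbmem
          simpa [Submodule.mem_bot] using this
        exact ⟨0, by simp [this, map_zero]⟩
      · -- recurse at weight i+2
        have hm2 : 2 ≤ m := by omega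
        -- get δ-preimage of d b via hyp
        obtain ⟨-, s, hs⟩ := (hyp (g.d b)).mp ⟨⟨b, rfl⟩, hδdb⟩
        have hproj : g.δ (g.π (i + 1 + 1 + 1) s) = g.d b := by
          have h1 := g.π_shift g.δ (-1)
            (fun j x hx => by simpa [sub_eq_add_neg] using g.δ_weight j x hx)
            (i + 1 + 1) s
          have h2 : (i + 1 + 1 : ℤ) - (-1) = i + 1 + 1 + 1 := by ring
          rw [h2] at h1
          rw [← h1, hs, g.π_of_mem hdbmem]
        have hrec := IH (m - 2) (by omega) (i + 2) (by push_cast [Nat.cast_sub hm2]; omega)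
          (g.d b) (by convert hdbmem using 2; ring) (g.d_d b)
          ⟨g.π (i + 1 + 1 + 1) s, by convert g.π_mem (i + 1 + 1 + 1) s using 2; ring, hproj⟩
        exact hrec
    obtain ⟨c₀, hc₀⟩ := hdb
    set b' := b - g.δ c₀ with hb'
    have hdb' : g.d b' = 0 := by rw [hb', map_sub, hc₀, sub_self]
    have hδb' : g.δ b' = v := by rw [hb', map_sub, g.δ_δ, sub_zero, hb]
    obtain ⟨w, hdw, hδw, u, hu⟩ := harm_rep b' hdb'
    refine ⟨-u, ?_⟩
    have hb'' : b' = g.d u + w := by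
      rw [← hu]; abel
    rw [map_neg, map_neg, g.dδ_anticomm, neg_neg, ← hδb', hb'', map_add, hδw, add_zero]

end Aux

/-- Let `V ∈ 𝒞ₙ` be such that every `d`-cohomology class admits a
harmonic representative and `im(d) ∩ ker(δ) = im(d) ∩ im(δ)`. Then
`im(d) ∩ im(δ) = im(dδ)`. -/
theorem imd_cap_imδ_eq_im_dδ {n : ℕ} {V : Type*} [AddCommGroup V] [Module ℝ V]
    (g : GRep n V)
    (harm_rep : ∀ v : V, g.d v = 0 →
      ∃ w, g.d w = 0 ∧ g.δ w = 0 ∧ ∃ u, v - w = g.d u)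
    (hyp : ∀ v : V, ((∃ a, g.d a = v) ∧ g.δ v = 0) ↔
      ((∃ a, g.d a = v) ∧ (∃ b, g.δ b = v))) :
    ∀ v : V, (∃ a, g.d a = v) → (∃ b, g.δ b = v) → ∃ c, g.d (g.δ c) = v := by
  classical
  rintro v ⟨a, ha⟩ ⟨b, hb⟩
  have hdv : g.d v = 0 := by rw [← ha]; exact g.d_d a
  -- every weight component of v is in im(dδ)
  have hcomp : ∀ i : ℤ, ∃ c, g.d (g.δ c) = g.π i v := by
    intro i
    have hπmem := g.π_mem i v
    -- d (π i v) = 0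
    have hshift_d := g.π_shift g.d 1 (fun j x hx => g.d_weight j x hx) (i + 1) v
    have hi1 : (i + 1 : ℤ) - 1 = i := by ring
    rw [hi1] at hshift_d
    have hdπ : g.d (g.π i v) = 0 := by rw [← hshift_d, hdv, g.π_zero]
    -- π i v = δ (π (i+1) b)
    have hshift_δ := g.π_shift g.δ (-1)
      (fun j x hx => by simpa [sub_eq_add_neg] using g.δ_weight j x hx) i b
    have hi2 : (i : ℤ) - (-1) = i + 1 := by ring
    rw [hi2] at hshift_δ
    have hδb : g.δ (g.π (i + 1) b) = g.π i v := by rw [← hshift_δ, hb]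
    have hm : (n : ℤ) ≤ i + ((n - i).toNat : ℤ) := by
      have := Int.self_le_toNat (n - i)
      omega
    exact g.key harm_rep hyp (n - i).toNat i hm (g.π i v) hπmem hdπ
      ⟨g.π (i + 1) b, g.π_mem (i + 1) b, hδb⟩
  choose c hc using hcomp
  refine ⟨∑ i ∈ (g.dec v).support, c i, ?_⟩
  rw [map_sum, map_sum]
  rw [Finset.sum_congr rfl fun i _ => hc i]
  exact g.sum_π v
end

section
/- Let V ∈ Cₙ and let w be a primitive element of degree i (i.e., fw = 0). Then f²(dw) = 0; consequently the primitive decomposition of dw has at most two terms: dw = v_{i+1} + e·v_{i-1} with v_{i+1}, v_{i-1} primitive. -/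
section Aux

variable {n : ℕ} {V : Type*} [AddCommGroup V] [Module ℝ V] (g : GRep n V)

lemma GRep.fe_apply (v : V) : g.f (g.e v) = g.e (g.f v) - g.h v := by
  have h1 : g.f * g.e = g.e * g.f - g.h := by
    have := g.comm_ef; abel_nf; abel_nf at this; rw [← this]; abel
  have := congrArg (fun T : Module.End ℝ V => T v) h1
  simpa [Module.End.mul_apply] using this

lemma GRep.fd_apply (v : V) : g.f (g.d v) = g.d (g.f v) + g.δ v := by
  have h1 : g.f * g.d = g.d * g.f + g.δ := by
    have := g.comm_fd; rw [← this]; abel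
  have := congrArg (fun T : Module.End ℝ V => T v) h1
  simpa [Module.End.mul_apply] using this

lemma GRep.fδ_apply (v : V) : g.f (g.δ v) = g.δ (g.f v) := by
  have h1 : g.f * g.δ = g.δ * g.f := by
    have := g.comm_fδ; rw [sub_eq_zero] at this; exact this
  have := congrArg (fun T : Module.End ℝ V => T v) h1
  simpa [Module.End.mul_apply] using this

lemma GRep.epow_weight_s14 (i : ℤ) (w : V) (hw : w ∈ g.weight i) :
    ∀ k : ℕ, (g.e ^ k) w ∈ g.weight (i + 2 * k) := by
  intro k
  induction k with
  | zero => simpa using hw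
  | succ m ih =>
    have h1 := g.e_weight _ _ ih
    have h2 : ((g.e ^ (m + 1)) w : V) = g.e ((g.e ^ m) w) := by
      rw [pow_succ']; rfl
    rw [h2]
    have h3 : i + 2 * ((m : ℤ) + 1) = i + 2 * m + 2 := by ring
    push_cast
    rw [h3]
    exact h1

lemma GRep.f_epow (i : ℤ) (w : V) (hw : w ∈ g.weight i) (hprim : g.f w = 0) :
    ∀ m : ℕ, g.f ((g.e ^ (m + 1)) w) =
      ((-((m : ℝ) + 1)) * ((i : ℝ) + m)) • (g.e ^ m) w := by
  intro m
  induction m with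
  | zero =>
    have h2 : ((g.e ^ 1) w : V) = g.e w := by simp
    rw [h2, g.fe_apply, hprim, g.h_weight i w hw]
    simp
  | succ m ih =>
    have h2 : ((g.e ^ (m + 2)) w : V) = g.e ((g.e ^ (m + 1)) w) := by
      rw [pow_succ']; rfl
    have hmem := g.epow_weight_s14 i w hw (m + 1)
    rw [h2, g.fe_apply, ih, g.h_weight _ _ hmem]
    have h3 : ((g.e ^ (m + 1)) w : V) = g.e ((g.e ^ m) w) := by
      rw [pow_succ']; rfl
    rw [map_smul, ← h3]
    rw [← sub_smul]
    congr 1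
    push_cast
    ring

lemma GRep.epow_zero (w : V) (hw : w ∈ g.weight 1) :
    (g.e ^ (n + 1)) w = 0 := by
  have hmem := g.epow_weight_s14 1 w hw (n + 1)
  push_cast at hmem
  have hb : (n : ℤ) < |1 + 2 * ((n : ℤ) + 1)| := by
    rw [abs_of_pos (by omega)]; omega
  rw [g.weight_bounded _ hb] at hmem
  simpa using hmem

lemma GRep.prim_one_zero (w : V) (hw : w ∈ g.weight 1) (hprim : g.f w = 0) :
    w = 0 := by
  have key : ∀ k : ℕ, (g.e ^ k) w = 0 → w = 0 := by
    intro k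
    induction k with
    | zero => intro hk; simpa using hk
    | succ m ih =>
      intro hk
      have h1 := g.f_epow 1 w hw hprim m
      rw [hk, map_zero] at h1
      have hscal : ((-((m : ℝ) + 1)) * (((1 : ℤ) : ℝ) + (m : ℕ)) : ℝ) ≠ 0 := by
        push_cast
        intro hz
        have hpos : (0 : ℝ) < ((m : ℝ) + 1) * (1 + (m : ℝ)) := by positivity
        nlinarith
      have := (smul_eq_zero.mp h1.symm).resolve_left hscal
      exact ih this
  exact key (n + 1) (g.epow_zero w hw)

end Aux

/-- Let `V ∈ 𝒞ₙ` and `w` primitive of degree `i` (`w ∈ V_i`, `fw = 0`).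
Then `f²(dw) = 0`, and consequently the primitive decomposition of `dw` has at most two
terms: `dw = v₁ + e v₂` with `v₁ ∈ V_{i+1}`, `v₂ ∈ V_{i-1}` primitive. -/
theorem d_of_primitive_two_terms {n : ℕ} {V : Type*} [AddCommGroup V] [Module ℝ V]
    (g : GRep n V) (i : ℤ) (w : V) (hw : w ∈ g.weight i) (hprim : g.f w = 0) :
    g.f (g.f (g.d w)) = 0 ∧
    ∃ v₁ v₂ : V, v₁ ∈ g.weight (i + 1) ∧ g.f v₁ = 0 ∧
      v₂ ∈ g.weight (i - 1) ∧ g.f v₂ = 0 ∧ g.d w = v₁ + g.e v₂ := by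
  have hfd : g.f (g.d w) = g.δ w := by
    rw [g.fd_apply, hprim, map_zero, zero_add]
  have hfδ : g.f (g.δ w) = 0 := by rw [g.fδ_apply, hprim, map_zero]
  have part1 : g.f (g.f (g.d w)) = 0 := by rw [hfd, hfδ]
  refine ⟨part1, ?_⟩
  by_cases hi : i = 1
  · -- then w = 0
    subst hi
    have hw0 : w = 0 := g.prim_one_zero w hw hprim
    refine ⟨0, 0, Submodule.zero_mem _, map_zero _, Submodule.zero_mem _, map_zero _, ?_⟩
    rw [hw0]
    simp
  · -- generic case
    set c : ℝ := (1 - (i : ℝ))⁻¹ with hc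
    have h1i : (1 : ℝ) - (i : ℝ) ≠ 0 := by
      intro h
      apply hi
      have : (i : ℝ) = 1 := by linarith
      exact_mod_cast this
    set u : V := g.δ w with hu
    have humem : u ∈ g.weight (i - 1) := g.δ_weight i w hw
    have hfu : g.f u = 0 := hfδ
    set v₂ : V := c • u with hv₂
    have hv₂mem : v₂ ∈ g.weight (i - 1) := Submodule.smul_mem _ _ humem
    have hfv₂ : g.f v₂ = 0 := by rw [hv₂, map_smul, hfu, smul_zero]
    set v₁ : V := g.d w - g.e v₂ with hv₁
    have hev₂mem : g.e v₂ ∈ g.weight (i + 1) := by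
      have := g.e_weight _ _ hv₂mem
      rwa [show i - 1 + 2 = i + 1 by ring] at this
    have hv₁mem : v₁ ∈ g.weight (i + 1) :=
      Submodule.sub_mem _ (g.d_weight i w hw) hev₂mem
    have hfv₁ : g.f v₁ = 0 := by
      have hsc : ((i : ℝ) - 1) * c = -1 := by
        rw [hc]; field_simp; ring
      rw [hv₁, map_sub, hfd, g.fe_apply, hfv₂, map_zero, zero_sub,
        g.h_weight _ _ hv₂mem, hv₂, smul_smul]
      push_cast
      rw [hsc]
      simp
    exact ⟨v₁, v₂, hv₁mem, hfv₁, hv₂mem, hfv₂, by rw [hv₁]; abel⟩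
end

section
/- Let V ∈ Cₙ and v_i ∈ V_i primitive. Then d δ v_i = (1 - i) ∂₊∂₋ v_i, where ∂₊, ∂₋ are defined by the primitive decomposition dv = ∂₊v + e∂₋v on primitive elements. -/
namespace GRepAux

variable {n : ℕ} {V : Type*} [AddCommGroup V] [Module ℝ V] (g : GRep n V)

lemma fe_apply (x : V) : g.f (g.e x) = g.e (g.f x) - g.h x := by
  have h1 := LinearMap.ext_iff.mp g.comm_ef x
  simp only [LinearMap.sub_apply, Module.End.mul_apply] at h1
  rw [← h1]; abel

lemma δ_apply (x : V) : g.δ x = g.f (g.d x) - g.d (g.f x) := by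
  have h1 := LinearMap.ext_iff.mp g.comm_fd x
  simp only [LinearMap.sub_apply, Module.End.mul_apply] at h1
  rw [← h1]

lemma epow_mem (w : V) (hw : w ∈ g.weight 0) :
    ∀ k : ℕ, (g.e ^ k) w ∈ g.weight (2 * k) := by
  intro k
  induction k with
  | zero => simpa using hw
  | succ k ih =>
    have h1 := g.e_weight _ _ ih
    have h2 : (2 * ((k:ℤ) + 1)) = 2 * k + 2 := by ring
    rw [pow_succ', Module.End.mul_apply]
    push_cast
    rw [h2]
    exact h1

lemma f_epow (w : V) (hw : w ∈ g.weight 0) (hfw : g.f w = 0) :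
    ∀ k : ℕ, g.f ((g.e ^ (k + 1)) w) = (-((k:ℝ) + 1) * k) • (g.e ^ k) w := by
  intro k
  induction k with
  | zero =>
    have hh : g.h w = (0:ℝ) • w := by simpa using g.h_weight 0 w hw
    simp [fe_apply, hfw, hh]
  | succ k ih =>
    have hmem := epow_mem g w hw (k + 1)
    have hh : g.h ((g.e ^ (k+1)) w) = ((2 * ((k:ℝ)+1))) • (g.e ^ (k+1)) w := by
      have := g.h_weight _ _ hmem
      push_cast at this ⊢
      convert this using 2 <;> push_cast
    have step : (g.e ^ (k + 1 + 1)) w = g.e ((g.e ^ (k+1)) w) := by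
      rw [pow_succ', Module.End.mul_apply]
    have step2 : (g.e ^ (k + 1)) w = g.e ((g.e ^ k) w) := by
      rw [pow_succ', Module.End.mul_apply]
    rw [step, fe_apply, ih, hh, map_smul, ← step2, ← sub_smul]
    congr 1
    push_cast
    ring

lemma e_prim_zero (w : V) (hw : w ∈ g.weight 0) (hfw : g.f w = 0) : g.e w = 0 := by
  have hz : (g.e ^ (n + 1)) w = 0 := by
    have hmem := epow_mem g w hw (n + 1)
    rw [g.weight_bounded (2 * ((n+1 : ℕ):ℤ)) (by rw [abs_of_nonneg (by positivity)]; push_cast; omega)]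
      at hmem
    simpa using hmem
  have key : ∀ m, m ≤ n → (g.e ^ (n + 1 - m)) w = 0 := by
    intro m
    induction m with
    | zero => intro _; simpa using hz
    | succ m ih =>
      intro hm
      have h1 := ih (Nat.le_of_succ_le hm)
      have hkeq : n + 1 - m = (n - m) + 1 := by omega
      rw [hkeq] at h1
      have h2 := f_epow g w hw hfw (n - m)
      rw [h1, map_zero] at h2
      have hcoef : (-(((n - m : ℕ):ℝ)) - 1) ≠ 0 := by
        have : (0:ℝ) ≤ ((n - m : ℕ):ℝ) := by positivity
        intro hc; nlinarith
      have hk1 : 1 ≤ n - m := by omega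
      have hcoef' : (-(((n - m : ℕ):ℝ) + 1) * ((n - m : ℕ):ℝ)) ≠ 0 := by
        apply mul_ne_zero
        · have : (0:ℝ) ≤ ((n - m : ℕ):ℝ) := by positivity
          intro hc; nlinarith
        · have : (1:ℝ) ≤ ((n - m : ℕ):ℝ) := by exact_mod_cast hk1
          intro hc; nlinarith
      have h3 : (g.e ^ (n - m)) w = 0 :=
        (smul_eq_zero.mp h2.symm).resolve_left hcoef'
      have : n + 1 - (m + 1) = n - m := by omega
      rw [this]
      exact h3
  have := key n le_rfl
  simpa using this

end GRepAux

open GRepAux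

/-- Let `V ∈ 𝒞ₙ` and `v ∈ V_i` primitive, with primitive decompositions
`dv = ∂₊v + e ∂₋v` and `d(∂₋v) = ∂₊∂₋v + e ∂₋∂₋v`. Then `dδv = (1 - i) • ∂₊∂₋v`. -/
theorem dδ_of_primitive {n : ℕ} {V : Type*} [AddCommGroup V] [Module ℝ V]
    (g : GRep n V) (i : ℤ) (v p q p₂ q₂ : V)
    (hv : v ∈ g.weight i) (hvprim : g.f v = 0)
    (hp : p ∈ g.weight (i + 1)) (hpprim : g.f p = 0)
    (hq : q ∈ g.weight (i - 1)) (hqprim : g.f q = 0)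
    (hdec : g.d v = p + g.e q)
    (hp₂ : p₂ ∈ g.weight i) (hp₂prim : g.f p₂ = 0)
    (hq₂ : q₂ ∈ g.weight (i - 2)) (hq₂prim : g.f q₂ = 0)
    (hdec₂ : g.d q = p₂ + g.e q₂) :
    g.d (g.δ v) = ((1 : ℝ) - (i : ℝ)) • p₂ := by
  have hhq : g.h q = ((i:ℝ) - 1) • q := by
    have := g.h_weight (i - 1) q hq
    push_cast at this
    exact this
  have hhq₂ : g.h q₂ = ((i:ℝ) - 2) • q₂ := by
    have := g.h_weight (i - 2) q₂ hq₂
    push_cast at this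
    exact this
  have hδv : g.δ v = ((1:ℝ) - i) • q := by
    rw [δ_apply, hvprim, map_zero, sub_zero, hdec, map_add, hpprim, zero_add,
      fe_apply, hqprim, map_zero, zero_sub, hhq]
    module
  have hδq : g.δ q = ((2:ℝ) - i) • q₂ := by
    rw [δ_apply, hqprim, map_zero, sub_zero, hdec₂, map_add, hp₂prim, zero_add,
      fe_apply, hq₂prim, map_zero, zero_sub, hhq₂]
    module
  have hδδ : g.δ (g.δ v) = 0 := by
    have h1 := LinearMap.ext_iff.mp g.δ_sq v
    simpa [Module.End.mul_apply] using h1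
  rw [hδv, map_smul, hδq, smul_smul] at hδδ
  rw [hδv, map_smul, hdec₂]
  rcases eq_or_ne i 1 with h1 | h1
  · subst h1
    push_cast
    simp
  rcases eq_or_ne i 2 with h2 | h2
  · subst h2
    have hq₂0 : q₂ ∈ g.weight 0 := by simpa using hq₂
    rw [e_prim_zero g q₂ hq₂0 hq₂prim, add_zero]
  · have hc : ((1:ℝ) - i) * ((2:ℝ) - i) ≠ 0 := by
      apply mul_ne_zero
      · rw [sub_ne_zero]
        intro hc
        exact h1 (by exact_mod_cast hc.symm)
      · rw [sub_ne_zero]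
        intro hc
        exact h2 (by exact_mod_cast hc.symm)
    have hq₂z : q₂ = 0 := (smul_eq_zero.mp hδδ).resolve_left hc
    rw [hq₂z, map_zero, add_zero]
end

section
/- The two-form ω = v₁* ∧ v₂* on the E-tangent bundle of ℝ² generated by v₁ = x∂ₓ + y∂_y and v₂ = -y∂ₓ + x∂_y is not E-exact: there are no smooth functions f, g on ℝ² with ω = ᴱd(f v₁* + g v₂*). Equivalently, there are no smooth f, g on ℝ² such that (∂g/∂x − ∂f/∂y)·x + (∂g/∂y + ∂f/∂x)·y = 1 for all (x,y) ∈ ℝ². -/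
/-- On `M = ℝ²` with `E ⊂ 𝔛(ℝ²)` generated by `v₁ = x∂ₓ + y∂_y` and
`v₂ = -y∂ₓ + x∂_y`, the `E`-symplectic form `ω = v₁* ∧ v₂*` is not `E`-exact: there are no
smooth functions `f, g : ℝ² → ℝ` with `ω = ᴱd(f v₁* + g v₂*)`.  Unfolding the `E`-de Rham
differential, this says exactly that there are no smooth `f, g` such that
`(∂g/∂x − ∂f/∂y)·x + (∂g/∂y + ∂f/∂x)·y = 1` (i.e. `v₁(g) − v₂(f) = 1`) holds at every
point `(x,y) ∈ ℝ²`. -/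
theorem E_symplectic_form_not_exact :
    ¬ ∃ f g : ℝ × ℝ → ℝ, ContDiff ℝ (⊤ : ℕ∞) f ∧ ContDiff ℝ (⊤ : ℕ∞) g ∧
      ∀ p : ℝ × ℝ,
        (fderiv ℝ g p (1, 0) - fderiv ℝ f p (0, 1)) * p.1 +
        (fderiv ℝ g p (0, 1) + fderiv ℝ f p (1, 0)) * p.2 = 1 := by
  rintro ⟨f, g, _, _, h⟩
  have := h (0, 0)
  simp at this
end
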